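/- arXiv:0811.1612 — 2 statements merged into one kernel-verified Lean document; each statement's English description precedes it below -/
import Mathlib

section
/- Let Λ, Λ' be relatively-separated subsets of ℝ^d. If there exists a matrix A = (a(λ,λ'))_{λ∈Λ,λ'∈Λ'} in the Sjöstrand class C(Λ,Λ') that has ℓ^p-stability for some 1 ≤ p ≤ ∞, then there exists a positive number R₀ such that for every bounded set K ⊂ ℝ^d, the cardinality of Λ ∩ B(K,R₀) is at least the cardinality of Λ' ∩ K, where B(K,R) is the set of all points of ℝ^d at distance less than R from K. -/
/-!
Choose `R₀` so that the part of `A` at distance `≥ R₀` from the diagonal has Schur norm at most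
`1/(2C)`, `C` the stability constant: this is possible because the Sjöstrand envelope is summable
and both sets meet every unit cube in boundedly many points. If `Λ ∩ B(K,R₀)` had fewer points
than `Λ' ∩ K`, linear algebra would give a nonzero `c` supported on `Λ' ∩ K` with `A c = 0` on
`Λ ∩ B(K,R₀)`. Elsewhere only the far part of `A` sees `c`, so `‖A c‖_p ≤ ‖c‖_p / (2C)`, against
`‖c‖_p ≤ C ‖A c‖_p`.
-/

open scoped ENNReal NNReal

/-- The cube `k + [0,1)^d` in `ℝ^d`. -/
def unitCube {d : ℕ} (k : Fin d → ℤ) : Set (Fin d → ℝ) :=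
  {x | ∀ i, (k i : ℝ) ≤ x i ∧ x i < k i + 1}

/-- The relative-separation constant `R(Λ) = sup_x ∑_{λ ∈ Λ} χ_{λ+[0,1)^d}(x)` of
a subset `Λ` of `ℝ^d`; `Λ` is relatively separated when `relSep Λ < ∞`. -/
noncomputable def relSep {d : ℕ} (Λ : Set (Fin d → ℝ)) : ℝ≥0∞ :=
  ⨆ x : Fin d → ℝ, ∑' l : Λ,
    (unitCube (0 : Fin d → ℤ)).indicator (fun _ => (1 : ℝ≥0∞)) (x - (l : Fin d → ℝ))

/-- The Sjöstrand class norm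
`‖A‖_C = ∑_{k ∈ ℤ^d} sup { |a(λ,λ')| : λ - λ' ∈ k + [0,1)^d }` of a matrix indexed by
`Λ × Λ'`; the matrix belongs to the Sjöstrand class `C(Λ,Λ')` when `sjNorm a < ∞`. -/
noncomputable def sjNorm {d : ℕ} {Λ Λ' : Set (Fin d → ℝ)} (a : Λ → Λ' → ℂ) : ℝ≥0∞ :=
  ∑' k : Fin d → ℤ, ⨆ (l : Λ) (l' : Λ')
    (_ : (l : Fin d → ℝ) - (l' : Fin d → ℝ) ∈ unitCube k), (‖a l l'‖₊ : ℝ≥0∞)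

/-- The action `(Ac)(λ) = ∑_{λ'} a(λ,λ') c(λ')` of a matrix on sequences. -/
noncomputable def matApply {d : ℕ} {Λ Λ' : Set (Fin d → ℝ)}
    (a : Λ → Λ' → ℂ) (c : Λ' → ℂ) : Λ → ℂ :=
  fun l => ∑' l' : Λ', a l l' * c l'

/-- The `ℓ^p` norm (valued in `ℝ≥0∞`) of an `ℝ≥0∞`-valued family:
for `p = ∞` it is the supremum, otherwise `(∑ f i ^ p)^(1/p)`. -/
noncomputable def seqNormE {ι : Type*} (p : ℝ≥0∞) (f : ι → ℝ≥0∞) : ℝ≥0∞ :=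
  if p = ∞ then ⨆ i, f i else (∑' i, f i ^ p.toReal) ^ (1 / p.toReal)

/-- The `ℓ^p` norm (valued in `ℝ≥0∞`) of a complex-valued family. -/
noncomputable def seqNorm {ι : Type*} (p : ℝ≥0∞) (f : ι → ℂ) : ℝ≥0∞ :=
  seqNormE p fun i => (‖f i‖₊ : ℝ≥0∞)

/-- An operator `A` between sequence spaces has `ℓ^p`-stability if there is a
positive finite constant `C` with `C⁻¹ ‖c‖_p ≤ ‖A c‖_p ≤ C ‖c‖_p` for every `c ∈ ℓ^p`. -/
def HasStability {ι κ : Type*} (p : ℝ≥0∞) (A : (ι → ℂ) → κ → ℂ) : Prop :=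
  ∃ C : ℝ≥0∞, 0 < C ∧ C < ∞ ∧
    ∀ c : ι → ℂ, seqNorm p c < ∞ →
      C⁻¹ * seqNorm p c ≤ seqNorm p (A c) ∧ seqNorm p (A c) ≤ C * seqNorm p c

namespace ENNReal

theorem tsum_mul_le_weight_mul_Lp {ι : Type*} {q : ℝ} (hq : 1 ≤ q) (w f : ι → ℝ≥0∞) :
    ∑' i, w i * f i ≤ (∑' i, w i) ^ (1 - q⁻¹) * (∑' i, w i * f i ^ q) ^ q⁻¹ := by
  have hq₁ : 0 ≤ 1 - q⁻¹ := sub_nonneg.2 (inv_le_one_of_one_le₀ hq)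
  rw [ENNReal.tsum_eq_iSup_sum]
  refine iSup_le fun s => (inner_le_weight_mul_Lp_of_nonneg s hq w f).trans ?_
  gcongr <;> exact ENNReal.sum_le_tsum s

theorem rpow_tsum_mul_le {ι : Type*} {q : ℝ} (hq : 1 ≤ q) (w f : ι → ℝ≥0∞) :
    (∑' i, w i * f i) ^ q ≤ (∑' i, w i) ^ (q - 1) * ∑' i, w i * f i ^ q := by
  have hq₀ : 0 < q := by linarith
  calc (∑' i, w i * f i) ^ q
      ≤ ((∑' i, w i) ^ (1 - q⁻¹) * (∑' i, w i * f i ^ q) ^ q⁻¹) ^ q := by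
        gcongr; exact tsum_mul_le_weight_mul_Lp hq w f
    _ = (∑' i, w i) ^ (q - 1) * ∑' i, w i * f i ^ q := by
        rw [ENNReal.mul_rpow_of_nonneg _ _ hq₀.le, ← ENNReal.rpow_mul, ← ENNReal.rpow_mul,
          sub_mul, one_mul, inv_mul_cancel₀ hq₀.ne', ENNReal.rpow_one]

theorem tsum_comp_le_mul_tsum {ι κ : Type*} [DecidableEq κ] (f : ι → κ) (s : κ → ℝ≥0∞)
    {M : ℝ≥0∞} (hM : ∀ k, ∑' i, (if f i = k then (1 : ℝ≥0∞) else 0) ≤ M) :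
    ∑' i, s (f i) ≤ M * ∑' k, s k :=
  calc ∑' i, s (f i) = ∑' i, ∑' k, s k * if f i = k then 1 else 0 :=
        tsum_congr fun i => by
          rw [tsum_eq_single (f i) fun k hk => by simp [Ne.symm hk]]
          simp
    _ = ∑' k, s k * ∑' i, if f i = k then 1 else 0 := by
        rw [ENNReal.tsum_comm]
        exact tsum_congr fun k => ENNReal.tsum_mul_left
    _ ≤ ∑' k, s k * M := by gcongr with k; exact hM k
    _ = M * ∑' k, s k := by rw [ENNReal.tsum_mul_right, mul_comm]

end ENNReal

section SeqNorm

variable {ι κ : Type*} {p : ℝ≥0∞}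

theorem seqNormE_mono {f g : ι → ℝ≥0∞} (h : ∀ i, f i ≤ g i) : seqNormE p f ≤ seqNormE p g := by
  unfold seqNormE
  split_ifs
  · exact iSup_mono h
  · gcongr with i; exact h i

theorem le_seqNormE (hp : p ≠ 0) (f : ι → ℝ≥0∞) (i : ι) : f i ≤ seqNormE p f := by
  unfold seqNormE
  split_ifs with hp_top
  · exact le_iSup f i
  · have hq : 0 < p.toReal := ENNReal.toReal_pos hp hp_top
    calc f i = (f i ^ p.toReal) ^ (1 / p.toReal) := by
          rw [← ENNReal.rpow_mul, mul_one_div_cancel hq.ne', ENNReal.rpow_one]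
      _ ≤ (∑' i, f i ^ p.toReal) ^ (1 / p.toReal) := by
          gcongr; exact ENNReal.le_tsum i

theorem seqNormE_lt_top (hp : p ≠ 0) {f : ι → ℝ≥0∞} (hf : ∀ i, f i ≠ ∞)
    (hfin : (Function.support f).Finite) : seqNormE p f < ∞ := by
  have hzero : ∀ i ∉ hfin.toFinset, f i = 0 := by simp
  unfold seqNormE
  split_ifs with hp_top
  · refine lt_of_le_of_lt (iSup_le fun i => ?_)
      (ENNReal.sum_lt_top.2 fun i (_ : i ∈ hfin.toFinset) => (hf i).lt_top)
    by_cases hi : i ∈ hfin.toFinset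
    · exact Finset.single_le_sum (fun _ _ => zero_le) hi
    · simp [hzero i hi]
  · have hq : 0 < p.toReal := ENNReal.toReal_pos hp hp_top
    rw [tsum_eq_sum fun i hi => by rw [hzero i hi, ENNReal.zero_rpow_of_pos hq]]
    exact ENNReal.rpow_lt_top_of_nonneg (by positivity)
      (ENNReal.sum_ne_top.2 fun i _ => ENNReal.rpow_ne_top_of_nonneg hq.le (hf i))

/-- Schur's test. -/
theorem seqNormE_tsum_mul_le (hp : 1 ≤ p) {t : ι → κ → ℝ≥0∞} {μ : ℝ≥0∞}
    (hrow : ∀ i, ∑' j, t i j ≤ μ) (hcol : ∀ j, ∑' i, t i j ≤ μ) (x : κ → ℝ≥0∞) :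
    seqNormE p (fun i => ∑' j, t i j * x j) ≤ μ * seqNormE p x := by
  unfold seqNormE
  split_ifs with hp_top
  · refine iSup_le fun i => ?_
    calc ∑' j, t i j * x j ≤ ∑' j, t i j * ⨆ j', x j' := by
          gcongr with j; exact le_iSup x j
      _ = (∑' j, t i j) * ⨆ j', x j' := ENNReal.tsum_mul_right
      _ ≤ μ * ⨆ j', x j' := by gcongr; exact hrow i
  · set q := p.toReal
    have hq : 1 ≤ q := by
      simpa using ENNReal.toReal_mono hp_top hp
    have hsum : ∑' i, (∑' j, t i j * x j) ^ q ≤ μ ^ q * ∑' j, x j ^ q :=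
      calc ∑' i, (∑' j, t i j * x j) ^ q
          ≤ ∑' i, μ ^ (q - 1) * ∑' j, t i j * x j ^ q := by
            gcongr with i
            refine (ENNReal.rpow_tsum_mul_le hq _ _).trans ?_
            gcongr
            exact hrow i
        _ = μ ^ (q - 1) * ∑' j, x j ^ q * ∑' i, t i j := by
            rw [ENNReal.tsum_mul_left, ENNReal.tsum_comm]
            congr 1
            refine tsum_congr fun j => ?_
            rw [← ENNReal.tsum_mul_left]
            exact tsum_congr fun i => mul_comm _ _
        _ ≤ μ ^ (q - 1) * ∑' j, x j ^ q * μ := by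
            gcongr with j; exact hcol j
        _ = μ ^ q * ∑' j, x j ^ q := by
            have hμ := ENNReal.rpow_add_of_nonneg (x := μ) (q - 1) 1 (by linarith) zero_le_one
            rw [sub_add_cancel, ENNReal.rpow_one] at hμ
            rw [ENNReal.tsum_mul_right, hμ]
            ring
    calc (∑' i, (∑' j, t i j * x j) ^ q) ^ (1 / q) ≤ (μ ^ q * ∑' j, x j ^ q) ^ (1 / q) := by
          gcongr
      _ = μ * (∑' j, x j ^ q) ^ (1 / q) := by
          rw [ENNReal.mul_rpow_of_nonneg _ _ (by positivity), ← ENNReal.rpow_mul,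
            mul_one_div_cancel (by positivity), ENNReal.rpow_one]

end SeqNorm

section UnitCube

variable {d : ℕ}

noncomputable def cubeIndex (v : Fin d → ℝ) : Fin d → ℤ := fun i => ⌊v i⌋

theorem mem_unitCube_iff {v : Fin d → ℝ} {k : Fin d → ℤ} : v ∈ unitCube k ↔ cubeIndex v = k := by
  simp only [unitCube, Set.mem_ofPred_eq, funext_iff, cubeIndex, Int.floor_eq_iff]

theorem cubeIndex_sub_intCast (v : Fin d → ℝ) (k : Fin d → ℤ) :
    cubeIndex (v - fun i => (k i : ℝ)) = cubeIndex v - k := by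
  funext i
  simp [cubeIndex, Int.floor_sub_intCast]

theorem dist_cubeIndex_lt_one (v : Fin d → ℝ) : dist v (fun i => (cubeIndex v i : ℝ)) < 1 := by
  refine (dist_pi_lt_iff one_pos).2 fun i => ?_
  rw [Real.dist_eq, cubeIndex, Int.self_sub_floor, abs_of_nonneg (Int.fract_nonneg _)]
  exact Int.fract_lt_one _

theorem exists_pos_forall_le_norm_cubeIndex_notMem (S : Finset (Fin d → ℤ)) :
    ∃ R > 0, ∀ v : Fin d → ℝ, R ≤ ‖v‖ → cubeIndex v ∉ S := by
  set B := ∑ k ∈ S, ‖fun i => (k i : ℝ)‖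
  refine ⟨B + 1, by positivity, fun v hv hvS => ?_⟩
  have hB : ‖fun i => (cubeIndex v i : ℝ)‖ ≤ B :=
    Finset.single_le_sum (f := fun k : Fin d → ℤ => ‖fun i => (k i : ℝ)‖)
      (fun _ _ => norm_nonneg _) hvS
  have := dist_cubeIndex_lt_one v
  rw [dist_eq_norm] at this
  linarith [norm_le_norm_add_norm_sub' v (fun i => (cubeIndex v i : ℝ))]

end UnitCube

section RelSep

variable {d : ℕ} (Λ : Set (Fin d → ℝ))

theorem tsum_ite_cubeIndex_sub_le_relSep (x : Fin d → ℝ) (k : Fin d → ℤ) :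
    ∑' l : Λ, (if cubeIndex (x - (l : Fin d → ℝ)) = k then (1 : ℝ≥0∞) else 0) ≤ relSep Λ := by
  classical
  refine le_of_eq_of_le (tsum_congr fun l => ?_)
    (le_iSup (fun x : Fin d → ℝ => ∑' l : Λ,
      (unitCube 0).indicator (fun _ => (1 : ℝ≥0∞)) (x - (l : Fin d → ℝ))) (x - fun i => (k i : ℝ)))
  simp only [Set.indicator_apply, mem_unitCube_iff, sub_right_comm _ _ (l : Fin d → ℝ),
    cubeIndex_sub_intCast, sub_eq_zero]

/-- The cube `w + [0,1)^d`, `w = y + k`, is covered by the `2^d` cubes `x - [0,1)^d` with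
`x ∈ w + {0,1}^d` that enter the definition of `relSep`. -/
theorem tsum_ite_cubeIndex_sub_le_two_pow_mul_relSep (y : Fin d → ℝ) (k : Fin d → ℤ) :
    ∑' l : Λ, (if cubeIndex ((l : Fin d → ℝ) - y) = k then (1 : ℝ≥0∞) else 0) ≤
      2 ^ d * relSep Λ := by
  set w : Fin d → ℝ := fun i => y i + k i
  set x : (Fin d → Bool) → Fin d → ℝ := fun ε i => w i + if ε i then 1 else 0
  have hcover : ∀ l : Λ, (if cubeIndex ((l : Fin d → ℝ) - y) = k then (1 : ℝ≥0∞) else 0) ≤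
      ∑ ε, if cubeIndex (x ε - (l : Fin d → ℝ)) = 0 then 1 else 0 := by
    intro l
    split_ifs with hl
    · refine le_trans ?_ (Finset.single_le_sum (fun _ _ => zero_le)
        (Finset.mem_univ fun i => decide (w i < (l : Fin d → ℝ) i)))
      rw [if_pos]
      funext i
      have hli := Int.floor_eq_iff.1 (congrFun hl i)
      simp only [Pi.sub_apply] at hli
      simp only [cubeIndex, Pi.sub_apply, Pi.zero_apply, Int.floor_eq_iff, x, w]
      split_ifs with hwl <;> simp at hwl <;> constructor <;> push_cast <;> linarith
    · exact zero_le
  calc ∑' l : Λ, (if cubeIndex ((l : Fin d → ℝ) - y) = k then (1 : ℝ≥0∞) else 0)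
      ≤ ∑' l : Λ, ∑ ε, if cubeIndex (x ε - (l : Fin d → ℝ)) = 0 then (1 : ℝ≥0∞) else 0 :=
        ENNReal.tsum_le_tsum hcover
    _ = ∑ ε, ∑' l : Λ, if cubeIndex (x ε - (l : Fin d → ℝ)) = 0 then (1 : ℝ≥0∞) else 0 :=
        Summable.tsum_finsetSum fun _ _ => ENNReal.summable
    _ ≤ ∑ _ε : Fin d → Bool, relSep Λ :=
        Finset.sum_le_sum fun ε _ => tsum_ite_cubeIndex_sub_le_relSep Λ (x ε) 0
    _ = 2 ^ d * relSep Λ := by simp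

end RelSep

section Sjostrand

variable {d : ℕ} {Λ Λ' : Set (Fin d → ℝ)}

/-- `sjNorm a = ∑' k, sjEnvelope a k`. -/
noncomputable def sjEnvelope (a : Λ → Λ' → ℂ) (k : Fin d → ℤ) : ℝ≥0∞ :=
  ⨆ (l : Λ) (l' : Λ') (_ : (l : Fin d → ℝ) - (l' : Fin d → ℝ) ∈ unitCube k), (‖a l l'‖₊ : ℝ≥0∞)

theorem nnnorm_le_sjEnvelope (a : Λ → Λ' → ℂ) (l : Λ) (l' : Λ') :
    (‖a l l'‖₊ : ℝ≥0∞) ≤ sjEnvelope a (cubeIndex ((l : Fin d → ℝ) - l')) :=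
  le_iSup_of_le l <| le_iSup_of_le l' <| le_iSup_of_le (mem_unitCube_iff.2 rfl) le_rfl

noncomputable def farPart (a : Λ → Λ' → ℂ) (R : ℝ) (l : Λ) (l' : Λ') : ℝ≥0∞ :=
  if R ≤ dist (l : Fin d → ℝ) l' then ‖a l l'‖₊ else 0

theorem exists_farPart_tsum_le (hΛ : relSep Λ < ∞) (hΛ' : relSep Λ' < ∞) {a : Λ → Λ' → ℂ}
    (ha : sjNorm a < ∞) {ε : ℝ≥0∞} (hε : ε ≠ 0) :
    ∃ R > 0, (∀ l, ∑' l', farPart a R l l' ≤ ε) ∧ ∀ l', ∑' l, farPart a R l l' ≤ ε := by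
  set M := 2 ^ d * relSep Λ + relSep Λ'
  have hM : M ≠ ∞ := by finiteness
  obtain ⟨S, hS⟩ : ∃ S : Finset (Fin d → ℤ), ∑' k : {k // k ∉ S}, sjEnvelope a k < ε / M :=
    ((ENNReal.tendsto_tsum_compl_atTop_zero ha.ne).eventually
      (gt_mem_nhds (ENNReal.div_pos hε hM))).exists
  obtain ⟨R, hR, hRS⟩ := exists_pos_forall_le_norm_cubeIndex_notMem S
  set tail := (↑S : Set (Fin d → ℤ))ᶜ.indicator (sjEnvelope a)
  have htail : ∑' k, tail k ≤ ε / M := by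
    rw [← tsum_subtype]
    exact hS.le
  have hfar : ∀ l l', farPart a R l l' ≤ tail (cubeIndex ((l : Fin d → ℝ) - l')) := by
    intro l l'
    unfold farPart
    split_ifs with hll'
    · have hk : cubeIndex ((l : Fin d → ℝ) - (l' : Fin d → ℝ)) ∈ (↑S : Set (Fin d → ℤ))ᶜ := by
        simpa using hRS _ (by rwa [← dist_eq_norm])
      exact (nnnorm_le_sjEnvelope a l l').trans_eq (Set.indicator_of_mem hk _).symm
    · exact zero_le
  refine ⟨R, hR, fun l => ?_, fun l' => ?_⟩
  · calc ∑' l', farPart a R l l' ≤ ∑' l' : Λ', tail (cubeIndex ((l : Fin d → ℝ) - l')) :=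
          ENNReal.tsum_le_tsum (hfar l)
      _ ≤ relSep Λ' * ∑' k, tail k :=
          ENNReal.tsum_comp_le_mul_tsum _ _ (tsum_ite_cubeIndex_sub_le_relSep Λ' l)
      _ ≤ M * (ε / M) := by gcongr; exact le_add_self
      _ ≤ ε := ENNReal.mul_div_le
  · calc ∑' l, farPart a R l l' ≤ ∑' l : Λ, tail (cubeIndex ((l : Fin d → ℝ) - l')) :=
          ENNReal.tsum_le_tsum fun l => hfar l l'
      _ ≤ 2 ^ d * relSep Λ * ∑' k, tail k :=
          ENNReal.tsum_comp_le_mul_tsum _ _ (tsum_ite_cubeIndex_sub_le_two_pow_mul_relSep Λ l')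
      _ ≤ M * (ε / M) := by gcongr; exact le_self_add
      _ ≤ ε := ENNReal.mul_div_le

theorem nnnorm_matApply_le_tsum_farPart {a : Λ → Λ' → ℂ} {R : ℝ} {K : Set (Fin d → ℝ)}
    {c : Λ' → ℂ} (hcK : ∀ l', c l' ≠ 0 → (l' : Fin d → ℝ) ∈ K)
    (hAc : ∀ l : Λ, (l : Fin d → ℝ) ∈ Metric.thickening R K → matApply a c l = 0) (l : Λ) :
    (‖matApply a c l‖₊ : ℝ≥0∞) ≤ ∑' l', farPart a R l l' * ‖c l'‖₊ := by
  by_cases hl : (l : Fin d → ℝ) ∈ Metric.thickening R K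
  · simp [hAc l hl]
  refine (enorm_tsum_le_tsum_enorm (f := fun l' => a l l' * c l')).trans
    (ENNReal.tsum_le_tsum fun l' => ?_)
  by_cases hc : c l' = 0
  · simp [hc]
  have hR : R ≤ dist (l : Fin d → ℝ) l' :=
    not_lt.1 fun h => hl (Metric.mem_thickening_iff.2 ⟨l', hcK l' hc, h⟩)
  simp [farPart, if_pos hR, enorm_eq_nnnorm]

end Sjostrand

section LinearAlgebra

variable {ι κ 𝕜 : Type*} [Field 𝕜]

theorem exists_ne_zero_forall_sum_mul_eq_zero (a : ι → κ → 𝕜) {I : Finset ι} {J : Finset κ}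
    (h : I.card < J.card) :
    ∃ c : κ → 𝕜, c ≠ 0 ∧ (∀ j ∉ J, c j = 0) ∧ ∀ i ∈ I, ∑ j ∈ J, a i j * c j = 0 := by
  let M : Matrix I J 𝕜 := fun i j => a i j
  obtain ⟨v, hv, hv0⟩ := Submodule.exists_mem_ne_zero_of_ne_bot <|
    LinearMap.ker_ne_bot_of_finrank_lt (f := M.mulVecLin) (by simpa using h)
  obtain ⟨j₀, hj₀⟩ := Function.ne_iff.1 hv0
  have hext : ∀ j : J, Function.extend Subtype.val v 0 (j : κ) = v j :=
    Subtype.val_injective.extend_apply v 0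
  refine ⟨Function.extend Subtype.val v 0, Function.ne_iff.2 ⟨j₀, by rwa [hext]⟩,
    fun j hj => Function.extend_apply' _ _ _ fun ⟨j', hj'⟩ => hj (hj' ▸ j'.2), fun i hi => ?_⟩
  rw [← Finset.sum_coe_sort J]
  simp_rw [hext]
  exact congrFun (LinearMap.mem_ker.1 hv) ⟨i, hi⟩

theorem exists_ne_zero_tsum_mul_eq_zero [TopologicalSpace 𝕜] (a : ι → κ → 𝕜) {I : Set ι}
    {J : Set κ} (h : I.encard < J.encard) :
    ∃ c : κ → 𝕜, c ≠ 0 ∧ (Function.support c).Finite ∧ (∀ j, c j ≠ 0 → j ∈ J) ∧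
      ∀ i ∈ I, ∑' j, a i j * c j = 0 := by
  obtain ⟨I, rfl⟩ := (Set.encard_lt_top_iff.1 (h.trans_le le_top)).exists_finset_coe
  obtain ⟨T, hTJ, hT⟩ := Set.exists_subset_encard_eq (Order.add_one_le_of_lt h)
  rw [Set.encard_coe_eq_coe_finsetCard] at hT
  obtain ⟨J', rfl⟩ := (Set.finite_of_encard_eq_coe hT).exists_finset_coe
  rw [Set.encard_coe_eq_coe_finsetCard] at hT
  have hcard : J'.card = I.card + 1 := by exact_mod_cast hT
  obtain ⟨c, hc0, hcJ', hc⟩ := exists_ne_zero_forall_sum_mul_eq_zero a (I := I) (J := J')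
    (by omega)
  have hsupp : Function.support c ⊆ J' := fun j hj => not_imp_comm.1 (hcJ' j) hj
  refine ⟨c, hc0, J'.finite_toSet.subset hsupp, fun j hj => hTJ (hsupp hj), fun i hi => ?_⟩
  rw [tsum_eq_sum fun j hj => by rw [hcJ' j hj, mul_zero]]
  exact hc i hi

end LinearAlgebra

/-- **Necessary density condition for stability.** Let `Λ, Λ'` be relatively-separated
subsets of `ℝ^d`. If some matrix `A ∈ C(Λ,Λ')` has `ℓ^p`-stability for some
`1 ≤ p ≤ ∞`, then there is `R₀ > 0` such that for every bounded set `K ⊆ ℝ^d`, the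
cardinality of `Λ ∩ B(K,R₀)` is at least the cardinality of `Λ' ∩ K`, where `B(K,R)`
is the set of points at distance less than `R` from `K`. -/
theorem sjostrand_stability_density {d : ℕ}
    (Λ Λ' : Set (Fin d → ℝ)) (hΛ : relSep Λ < ∞) (hΛ' : relSep Λ' < ∞)
    (a : Λ → Λ' → ℂ) (ha : sjNorm a < ∞)
    (p : ℝ≥0∞) (hp : 1 ≤ p)
    (hstab : HasStability p (matApply a)) :
    ∃ R₀ : ℝ, 0 < R₀ ∧
      ∀ K : Set (Fin d → ℝ), Bornology.IsBounded K →
        (Λ' ∩ K).encard ≤ (Λ ∩ Metric.thickening R₀ K).encard := by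
  obtain ⟨C, hC0, hCtop, hC⟩ := hstab
  have hCinv : C⁻¹ ≠ 0 := ENNReal.inv_ne_zero.2 hCtop.ne
  obtain ⟨R₀, hR₀, hrow, hcol⟩ := exists_farPart_tsum_le hΛ hΛ' ha (ENNReal.half_pos hCinv).ne'
  refine ⟨R₀, hR₀, fun K _ => ?_⟩
  by_contra! hlt
  rw [← Subtype.image_preimage_coe, ← Subtype.image_preimage_coe,
    Subtype.val_injective.encard_image, Subtype.val_injective.encard_image] at hlt
  obtain ⟨c, hc0, hcfin, hcK, hAc⟩ := exists_ne_zero_tsum_mul_eq_zero a hlt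
  have hp0 : p ≠ 0 := (zero_lt_one.trans_le hp).ne'
  have hN : seqNorm p c < ∞ := seqNormE_lt_top hp0 (fun _ => ENNReal.coe_ne_top)
    (hcfin.subset fun j hj => by simpa using hj)
  have hN0 : seqNorm p c ≠ 0 := by
    obtain ⟨j, hj⟩ := Function.ne_iff.1 hc0
    exact ((ENNReal.coe_ne_zero.2 (nnnorm_ne_zero_iff.2 hj)).bot_lt.trans_le
      (le_seqNormE hp0 _ j)).ne'
  have hupper : seqNorm p (matApply a c) ≤ C⁻¹ / 2 * seqNorm p c :=
    (seqNormE_mono (nnnorm_matApply_le_tsum_farPart hcK hAc)).trans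
      (seqNormE_tsum_mul_le hp hrow hcol _)
  exact (ENNReal.mul_lt_mul_left hN0 hN.ne (ENNReal.half_lt_self hCinv
    (ENNReal.inv_ne_top.2 hC0.ne'))).not_ge ((hC c hN).1.trans hupper)
end

section
/- Let Λ be a relatively-separated subset of ℝ^d, let Φ = {φ_λ : λ ∈ Λ} satisfy |φ_λ(x)| ≤ h(x−λ) for all x ∈ ℝ^d and λ ∈ Λ, where h(x) := sup_{λ∈Λ} |φ_λ(x+λ)| belongs to the Wiener amalgam space W₁. For an integer n ≥ 1, define the matrix A_n = (a_n(λ',λ))_{λ'∈2^{−n}ℤ^d, λ∈Λ} by a_n(λ',λ) = 2^{nd} ∫_{ℝ^d} φ_λ(y) χ_{[0,1)^d}(2^n(y−λ')) dy. Then A_n belongs to the Sjöstrand class C(2^{−n}ℤ^d, Λ) with ‖A_n‖_C ≤ 2^d ‖h‖_{W₁}. -/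
open scoped ENNReal NNReal

open MeasureTheory

/-- The Wiener amalgam space `W₁` norm of an `ℝ≥0∞`-valued function on `ℝ^d`:
`∑_{k ∈ ℤ^d} sup_{x ∈ k + [0,1)^d} g x`. -/
noncomputable def wienerNorm {d : ℕ} (g : (Fin d → ℝ) → ℝ≥0∞) : ℝ≥0∞ :=
  ∑' k : Fin d → ℤ, ⨆ x ∈ unitCube k, g x

/-- The dyadic lattice `2⁻ⁿ ℤ^d` in `ℝ^d`. -/
def dyadicLattice (d n : ℕ) : Set (Fin d → ℝ) :=
  {x | ∃ k : Fin d → ℤ, ∀ i, x i = (k i : ℝ) / 2 ^ n}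

/-! The entry `a_n(λ', λ)` is the mean of `φ_λ` over the cube `λ' + 2⁻ⁿ[0,1)^d`. When
`λ' - λ ∈ k + [0,1)^d`, this cube translated by `-λ` lies in `k + [0,2)^d`, the union of the
`2^d` unit cubes `k + ε + [0,1)^d`, `ε ∈ {0,1}^d`, on each of which `|φ_λ(· + λ)| ≤ h`. Hence
`|a_n(λ', λ)| ≤ ∑_ε sup_{k + ε + [0,1)^d} h`, and summing over `k` counts every term of
`‖h‖_{W₁}` exactly `2^d` times. -/

def cubeCorner {d : ℕ} (ε : Fin d → Bool) : Fin d → ℤ := fun i => ((ε i).toNat : ℤ)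

lemma exists_add_mem_unitCube_add_cubeCorner {d : ℕ} {k : Fin d → ℤ} {x v : Fin d → ℝ}
    (hx : x ∈ unitCube k) (hv : v ∈ unitCube 0) :
    ∃ ε : Fin d → Bool, x + v ∈ unitCube (k + cubeCorner ε) := by
  refine ⟨fun i => decide ((k i : ℝ) + 1 ≤ x i + v i), fun i => ?_⟩
  obtain ⟨hx₁, hx₂⟩ := hx i
  obtain ⟨hv₁, hv₂⟩ := hv i
  simp only [Pi.zero_apply, Int.cast_zero, zero_add] at hv₁ hv₂
  by_cases h : (k i : ℝ) + 1 ≤ x i + v i <;>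
    simp only [cubeCorner, h, decide_true, decide_false, Bool.toNat_true, Bool.toNat_false,
      Pi.add_apply, Int.cast_add, Nat.cast_one, Nat.cast_zero, Int.cast_one, add_zero] <;>
    exact ⟨by first | trivial | linarith, by linarith⟩

lemma le_sum_iSup_unitCube_add_cubeCorner {d : ℕ} (g : (Fin d → ℝ) → ℝ≥0∞)
    {k : Fin d → ℤ} {x v : Fin d → ℝ} (hx : x ∈ unitCube k) (hv : v ∈ unitCube 0) :
    g (x + v) ≤ ∑ ε : Fin d → Bool, ⨆ z ∈ unitCube (k + cubeCorner ε), g z := by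
  obtain ⟨ε, hε⟩ := exists_add_mem_unitCube_add_cubeCorner hx hv
  exact (le_iSup₂ (f := fun z (_ : z ∈ unitCube (k + cubeCorner ε)) => g z) _ hε).trans
    (Finset.single_le_sum (f := fun ε => ⨆ z ∈ unitCube (k + cubeCorner ε), g z)
      (fun _ _ => zero_le) (Finset.mem_univ ε))

lemma tsum_sum_iSup_unitCube_add_cubeCorner {d : ℕ} (g : (Fin d → ℝ) → ℝ≥0∞) :
    ∑' k : Fin d → ℤ, ∑ ε : Fin d → Bool, ⨆ z ∈ unitCube (k + cubeCorner ε), g z =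
      2 ^ d * wienerNorm g := by
  calc _ = ∑ ε : Fin d → Bool, ∑' k, ⨆ z ∈ unitCube (k + cubeCorner ε), g z :=
        Summable.tsum_finsetSum fun _ _ => ENNReal.summable
    _ = ∑ _ε : Fin d → Bool, wienerNorm g :=
        Finset.sum_congr rfl fun ε _ =>
          (Equiv.addRight (cubeCorner ε)).tsum_eq fun k => ⨆ z ∈ unitCube k, g z
    _ = 2 ^ d * wienerNorm g := by simp

def scaledCube {d : ℕ} (a : Fin d → ℝ) (c : ℝ) : Set (Fin d → ℝ) :=
  {y | (fun i => c * (y i - a i)) ∈ unitCube 0}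

lemma scaledCube_eq_pi {d : ℕ} (a : Fin d → ℝ) {c : ℝ} (hc : 0 < c) :
    scaledCube a c = Set.univ.pi fun i => Set.Ico (a i) (a i + c⁻¹) := by
  ext y
  simp only [scaledCube, unitCube, Set.mem_ofPred_eq, Set.mem_pi, Set.mem_univ, true_implies,
    Set.mem_Ico, Pi.zero_apply, Int.cast_zero, zero_add]
  refine forall_congr' fun i => and_congr ?_ ?_
  · rw [mul_nonneg_iff_of_pos_left hc, sub_nonneg]
  · rw [← sub_lt_iff_lt_add', ← mul_one c⁻¹, lt_inv_mul_iff₀ hc]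

lemma volume_scaledCube {d : ℕ} (a : Fin d → ℝ) {c : ℝ} (hc : 0 < c) :
    volume (scaledCube a c) = ENNReal.ofReal c⁻¹ ^ d := by
  simp [scaledCube_eq_pi a hc, Real.volume_pi_Ico]

lemma sub_mem_unitCube_zero_of_mem_scaledCube {d : ℕ} {a y : Fin d → ℝ} {c : ℝ} (hc : 1 ≤ c)
    (hy : y ∈ scaledCube a c) : y - a ∈ unitCube 0 := by
  rw [scaledCube_eq_pi a (by linarith)] at hy
  intro i
  obtain ⟨h₁, h₂⟩ := hy i (Set.mem_univ i)
  have : c⁻¹ ≤ 1 := inv_le_one_of_one_le₀ hc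
  simp only [Pi.zero_apply, Int.cast_zero, zero_add, Pi.sub_apply]
  constructor <;> linarith

lemma enorm_average_over_scaledCube_le {d : ℕ} {f : (Fin d → ℝ) → ℂ} {a : Fin d → ℝ} {c : ℝ}
    (hc : 0 < c) {M : ℝ≥0∞} (hf : ∀ y ∈ scaledCube a c, ‖f y‖ₑ ≤ M) :
    ‖(c : ℂ) ^ d * ∫ y, f y * (unitCube 0).indicator (fun _ => (1 : ℂ))
      (fun i => c * (y i - a i))‖ₑ ≤ M := by
  have hS : MeasurableSet (scaledCube a c) := by
    rw [scaledCube_eq_pi a hc]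
    exact MeasurableSet.univ_pi fun _ => measurableSet_Ico
  have hintegrand : (fun y => f y * (unitCube 0).indicator (fun _ => (1 : ℂ))
      (fun i => c * (y i - a i))) = (scaledCube a c).indicator f := by
    ext y
    by_cases hy : y ∈ scaledCube a c
    · simp [Set.indicator_of_mem hy, Set.indicator_of_mem (show _ ∈ unitCube 0 from hy)]
    · simp [Set.indicator_of_notMem hy, Set.indicator_of_notMem (show _ ∉ unitCube 0 from hy)]
  have hcd : ‖(c : ℂ) ^ d‖ₑ * ENNReal.ofReal c⁻¹ ^ d = 1 := by
    rw [← ofReal_norm, norm_pow, Complex.norm_real, Real.norm_of_nonneg hc.le,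
      ENNReal.ofReal_pow hc.le, ← mul_pow, ← ENNReal.ofReal_mul hc.le, mul_inv_cancel₀ hc.ne',
      ENNReal.ofReal_one, one_pow]
  calc _ = ‖(c : ℂ) ^ d‖ₑ * ‖∫ y in scaledCube a c, f y‖ₑ := by
        rw [hintegrand, integral_indicator hS, enorm_mul]
    _ ≤ ‖(c : ℂ) ^ d‖ₑ * ∫⁻ y in scaledCube a c, M := by
        gcongr
        exact (enorm_integral_le_lintegral_enorm _).trans (setLIntegral_mono' hS hf)
    _ = M := by
        rw [setLIntegral_const, volume_scaledCube a hc, mul_comm M, ← mul_assoc, hcd, one_mul]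

lemma enorm_average_over_scaledCube_le_sum_iSup {d : ℕ} {Λ : Set (Fin d → ℝ)}
    (φ : Λ → (Fin d → ℝ) → ℂ) {c : ℝ} (hc : 1 ≤ c) {k : Fin d → ℤ} {a : Fin d → ℝ} {l : Λ}
    (hk : a - l ∈ unitCube k) :
    ‖(c : ℂ) ^ d * ∫ y, φ l y * (unitCube 0).indicator (fun _ => (1 : ℂ))
      (fun i => c * (y i - a i))‖ₑ ≤
      ∑ ε : Fin d → Bool,
        ⨆ z ∈ unitCube (k + cubeCorner ε), ⨆ l : Λ, ‖φ l (z + (l : Fin d → ℝ))‖ₑ := by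
  refine enorm_average_over_scaledCube_le (by linarith) fun y hy => ?_
  calc ‖φ l y‖ₑ ≤ ⨆ l' : Λ, ‖φ l' ((a - l + (y - a)) + (l' : Fin d → ℝ))‖ₑ :=
        le_iSup_of_le l (by rw [sub_add_sub_cancel', sub_add_cancel])
    _ ≤ _ := le_sum_iSup_unitCube_add_cubeCorner
        (fun z => ⨆ l : Λ, ‖φ l (z + (l : Fin d → ℝ))‖ₑ) hk
        (sub_mem_unitCube_zero_of_mem_scaledCube hc hy)

theorem discretization_matrix_in_sjostrand_class_general {d : ℕ}
    (Λ : Set (Fin d → ℝ))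
    (φ : Λ → (Fin d → ℝ) → ℂ)
    (n : ℕ)
    (A : dyadicLattice d n → Λ → ℂ)
    (hA : ∀ (l' : dyadicLattice d n) (l : Λ),
      A l' l = (2 : ℂ) ^ (n * d) * ∫ y : Fin d → ℝ,
        φ l y * (unitCube (0 : Fin d → ℤ)).indicator (fun _ => (1 : ℂ))
          (fun i => 2 ^ n * (y i - (l' : Fin d → ℝ) i))) :
    sjNorm A ≤ (2 : ℝ≥0∞) ^ d *
      wienerNorm (fun x => ⨆ l : Λ, (‖φ l (x + (l : Fin d → ℝ))‖₊ : ℝ≥0∞)) := by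
  have hentry : ∀ k (l' : dyadicLattice d n) (l : Λ), (l' : Fin d → ℝ) - l ∈ unitCube k →
      ‖A l' l‖ₑ ≤ ∑ ε : Fin d → Bool,
        ⨆ z ∈ unitCube (k + cubeCorner ε), ⨆ l : Λ, ‖φ l (z + (l : Fin d → ℝ))‖ₑ := by
    intro k l' l hk
    rw [hA, pow_mul]
    exact_mod_cast enorm_average_over_scaledCube_le_sum_iSup φ (one_le_pow₀ one_le_two) hk
  calc sjNorm A ≤ ∑' k : Fin d → ℤ, ∑ ε : Fin d → Bool,
        ⨆ z ∈ unitCube (k + cubeCorner ε), ⨆ l : Λ, ‖φ l (z + (l : Fin d → ℝ))‖ₑ :=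
        ENNReal.tsum_le_tsum fun k => iSup_le fun l' => iSup_le fun l => iSup_le (hentry k l' l)
    _ = _ := tsum_sum_iSup_unitCube_add_cubeCorner _

/-- **Sjöstrand-class membership of the discretization matrix.** Let `Λ ⊆ ℝ^d` be
relatively separated and `Φ = (φ_λ)` satisfy `|φ_λ(x)| ≤ h(x-λ)` with
`h(x) = sup_λ |φ_λ(x+λ)|` in the Wiener amalgam space `W₁`. Then the matrix
`A_n = (a_n(λ',λ))_{λ' ∈ 2⁻ⁿℤ^d, λ ∈ Λ}` with
`a_n(λ',λ) = 2^{nd} ∫ φ_λ(y) χ_{[0,1)^d}(2ⁿ(y - λ')) dy` belongs to the Sjöstrand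
class `C(2⁻ⁿℤ^d, Λ)`, with `‖A_n‖_C ≤ 2^d ‖h‖_{W₁}`. -/
theorem discretization_matrix_in_sjostrand_class {d : ℕ}
    (Λ : Set (Fin d → ℝ)) (hΛ : relSep Λ < ∞)
    (φ : Λ → (Fin d → ℝ) → ℂ)
    (hW : wienerNorm (fun x => ⨆ l : Λ, (‖φ l (x + (l : Fin d → ℝ))‖₊ : ℝ≥0∞)) < ∞)
    (n : ℕ) (hn : 1 ≤ n)
    (A : dyadicLattice d n → Λ → ℂ)
    (hA : ∀ (l' : dyadicLattice d n) (l : Λ),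
      A l' l = (2 : ℂ) ^ (n * d) * ∫ y : Fin d → ℝ,
        φ l y * (unitCube (0 : Fin d → ℤ)).indicator (fun _ => (1 : ℂ))
          (fun i => 2 ^ n * (y i - (l' : Fin d → ℝ) i))) :
    sjNorm A ≤ (2 : ℝ≥0∞) ^ d *
      wienerNorm (fun x => ⨆ l : Λ, (‖φ l (x + (l : Fin d → ℝ))‖₊ : ℝ≥0∞)) :=
  discretization_matrix_in_sjostrand_class_general Λ φ n A hA
end
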